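/- arXiv:1804.10576 — 2 statements merged into one kernel-verified Lean document; each statement's English description precedes it below -/
import Mathlib

section
/- Let $\nu(x)=\sum_{p=1}^{p_0}\gamma_p^2 x^p$ be a finite mixture and regard $F_{N,\beta}(H_{N,\nu}(\cdot),m,\rho)$ as a function of the array $\mathbf{J}=(J^{(p)}_{i_1,\dots,i_p})$ of disorder coefficients. Then this function is Lipschitz continuous (from Euclidean space to $\mathbb{R}$) with Lipschitz constant at most $\beta\sqrt{\frac{\nu(1)}{N}\big(\frac1m+\rho\frac{m-1}{m}\big)}$. -/
open MeasureTheory Real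

/-- The index set of the disorder coefficients: a degree `p.1 + 1 ∈ {1,…,p₀}` together
with a tuple `(i₁,…,i_p)`. -/
abbrev DisorderIndex (N p₀ : ℕ) := (p : Fin p₀) × (Fin (p.1 + 1) → Fin N)

/-- The mixed `p`-spin Hamiltonian `H_{N,ν}(J, σ)` for the finite mixture
`ν(x) = ∑_{p=1}^{p₀} γ_p² x^p`. -/
noncomputable def Hmix (N p₀ : ℕ) (γ : ℕ → ℝ) (J : DisorderIndex N p₀ → ℝ)
    (σ : Fin N → ℝ) : ℝ :=
  ∑ p : Fin p₀, γ (p.1 + 1) * (N : ℝ) ^ (-(p.1 : ℝ) / 2) *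
    ∑ iv : Fin (p.1 + 1) → Fin N, J ⟨p, iv⟩ * ∏ k, σ (iv k)

/-- The constraint set `T_N(m,ρ)`, for configurations on the sphere of radius `√N`. -/
def TNf (N m : ℕ) (ρ : ℝ) : Set (Fin m → (Fin N → ℝ)) :=
  {σ | (∀ i, ∑ k, (σ i k) ^ 2 = (N : ℝ)) ∧
    ∀ i j, i ≠ j → |(∑ k, σ i k * σ j k) / N| < ρ}

/-- Constrained free energy of the mixed Hamiltonian, as a function of the
disorder coefficients `J`. -/
noncomputable def freeEnergyJ (N p₀ m : ℕ) (β ρ : ℝ) (γ : ℕ → ℝ)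
    (μ : Measure (Fin N → ℝ)) [SigmaFinite μ] (J : DisorderIndex N p₀ → ℝ) : ℝ :=
  (1 / ((m : ℝ) * N)) * Real.log
    (∫ σ in TNf N m ρ, Real.exp (-β * ∑ i, Hmix N p₀ γ J (σ i))
      ∂(Measure.pi fun _ : Fin m => μ))

/-!
The total energy `∑ᵢ H(J, σᵢ)` is linear in `J`, with coefficient vector `c(σ)`. Expanding
`‖c(σ)‖²` gives `∑ₚ γₚ² N^{-(p-1)} ∑_{i,j} ⟨σᵢ, σⱼ⟩^p`; on `T_N(m, ρ)` the overlaps are `N` on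
the diagonal and at most `ρN` in absolute value off it, so `‖c(σ)‖² ≤ ν(1) N (m + m(m-1)ρ)`.
By Cauchy–Schwarz the exponents for `J` and `J'` then differ by at most
`β ‖J - J'‖ ‖c(σ)‖` uniformly on `T_N(m, ρ)`, and `log ∫ exp` is `1`-Lipschitz in the sup norm
of the exponent.
-/

section LogPartitionFunction

variable {α : Type*} [MeasurableSpace α] {μ : Measure α} {s : Set α} {f g : α → ℝ}

lemma setIntegral_exp_pos (hμs : μ s ≠ 0) (hf : IntegrableOn (fun x => exp (f x)) s μ) :
    0 < ∫ x in s, exp (f x) ∂μ := by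
  rw [setIntegral_pos_iff_support_of_nonneg_ae (.of_forall fun _ => (exp_pos _).le) hf]
  simpa [Function.support, (exp_pos _).ne'] using pos_iff_ne_zero.mpr hμs

lemma log_setIntegral_exp_le_add (hs : MeasurableSet s) (hμs : μ s ≠ 0)
    (hf : IntegrableOn (fun x => exp (f x)) s μ) (hg : IntegrableOn (fun x => exp (g x)) s μ)
    {K : ℝ} (hfg : ∀ x ∈ s, f x ≤ g x + K) :
    log (∫ x in s, exp (f x) ∂μ) ≤ log (∫ x in s, exp (g x) ∂μ) + K := by
  have hmono : ∫ x in s, exp (f x) ∂μ ≤ exp K * ∫ x in s, exp (g x) ∂μ := by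
    rw [← integral_const_mul]
    refine setIntegral_mono_on hf (hg.const_mul _) hs fun x hx => ?_
    rw [← exp_add]
    exact exp_le_exp.mpr (by linarith [hfg x hx])
  calc log (∫ x in s, exp (f x) ∂μ) ≤ log (exp K * ∫ x in s, exp (g x) ∂μ) :=
        log_le_log (setIntegral_exp_pos hμs hf) hmono
    _ = log (∫ x in s, exp (g x) ∂μ) + K := by
        rw [log_mul (exp_ne_zero _) (setIntegral_exp_pos hμs hg).ne', log_exp, add_comm]

lemma abs_log_setIntegral_exp_sub_le (hs : MeasurableSet s) (hμs : μ s ≠ 0)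
    (hf : IntegrableOn (fun x => exp (f x)) s μ) (hg : IntegrableOn (fun x => exp (g x)) s μ)
    {K : ℝ} (hfg : ∀ x ∈ s, |f x - g x| ≤ K) :
    |log (∫ x in s, exp (f x) ∂μ) - log (∫ x in s, exp (g x) ∂μ)| ≤ K := by
  rw [abs_sub_le_iff, sub_le_iff_le_add', sub_le_iff_le_add']
  constructor
  · exact log_setIntegral_exp_le_add hs hμs hf hg fun x hx => by
      linarith [le_abs_self (f x - g x), hfg x hx]
  · exact log_setIntegral_exp_le_add hs hμs hg hf fun x hx => by
      linarith [neg_abs_le (f x - g x), hfg x hx]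

end LogPartitionFunction

lemma pow_succ_le_of_abs_le {x a b : ℝ} (ha : |x| ≤ a) (hb : |x| ≤ b) (n : ℕ) :
    x ^ (n + 1) ≤ a ^ n * b :=
  calc x ^ (n + 1) ≤ |x| ^ n * |x| := by rw [← pow_succ, ← abs_pow]; exact le_abs_self _
    _ ≤ a ^ n * b :=
        mul_le_mul (pow_le_pow_left₀ (abs_nonneg x) ha n) hb (abs_nonneg x)
          (pow_nonneg ((abs_nonneg x).trans ha) n)

lemma sum_sq_sum_prod_eq_sum_sum_inner_pow {ι : Type*} [Fintype ι] (N n : ℕ)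
    (σ : ι → Fin N → ℝ) :
    ∑ iv : Fin n → Fin N, (∑ i, ∏ k, σ i (iv k)) ^ 2
      = ∑ i, ∑ j, (∑ l, σ i l * σ j l) ^ n := by
  simp_rw [sq, Finset.sum_mul_sum, ← Finset.prod_mul_distrib, Fintype.sum_pow]
  rw [Finset.sum_comm]
  exact Finset.sum_congr rfl fun i _ => Finset.sum_comm

lemma sum_sum_ite_eq (m : ℕ) (ρ : ℝ) :
    ∑ i : Fin m, ∑ j : Fin m, (if i = j then (1 : ℝ) else ρ) = m + m * (m - 1) * ρ := by
  have (i j : Fin m) : (if i = j then (1 : ℝ) else ρ) = ρ + if i = j then 1 - ρ else 0 := by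
    split_ifs <;> ring
  simp only [this, Finset.sum_add_distrib, Finset.sum_const, Finset.card_univ, Fintype.card_fin,
    nsmul_eq_mul, Finset.sum_ite_eq, Finset.mem_univ, ↓reduceIte]
  ring

lemma rpow_neg_half_sq_mul_pow_succ {N : ℝ} (hN : 0 < N) (p : ℕ) :
    (N ^ (-(p : ℝ) / 2)) ^ 2 * N ^ (p + 1) = N := by
  rw [← rpow_natCast _ 2, ← rpow_mul hN.le, ← rpow_natCast N, ← rpow_add hN]
  norm_num

section TNf

variable {N m : ℕ} {ρ : ℝ}

lemma measurableSet_TNf : MeasurableSet (TNf N m ρ) := by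
  simp only [TNf, Set.ofPred_and, Set.ofPred_forall]
  exact .inter (.iInter fun i => measurableSet_eq_fun (by fun_prop) measurable_const)
    (.iInter fun i => .iInter fun j => .iInter fun _ =>
      measurableSet_lt (by fun_prop) measurable_const)

lemma inner_pow_succ_le_of_mem_TNf {σ : Fin m → Fin N → ℝ} (hσ : σ ∈ TNf N m ρ)
    (hN : 0 < N) (i j : Fin m) (n : ℕ) :
    (∑ l, σ i l * σ j l) ^ (n + 1) ≤ (N : ℝ) ^ (n + 1) * (if i = j then 1 else ρ) := by
  obtain ⟨hsphere, hoverlap⟩ := hσ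
  have hNpos : (0 : ℝ) < N := by exact_mod_cast hN
  have hCS : |∑ l, σ i l * σ j l| ≤ N := by
    refine abs_le_of_sq_le_sq ?_ hNpos.le
    simpa [← sq, hsphere] using Finset.sum_mul_sq_le_sq_mul_sq Finset.univ (σ i) (σ j)
  split_ifs with hij
  · subst hij
    simpa [pow_succ] using pow_succ_le_of_abs_le hCS hCS n
  · have := hoverlap i j hij
    rw [abs_div, abs_of_pos hNpos, div_lt_iff₀ hNpos] at this
    simpa [pow_succ, mul_assoc, mul_comm ρ] using pow_succ_le_of_abs_le hCS this.le n

end TNf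

section Hamiltonian

variable {N p₀ m : ℕ}

noncomputable def energyCoeff (γ : ℕ → ℝ) (σ : Fin m → Fin N → ℝ)
    (x : DisorderIndex N p₀) : ℝ :=
  γ (x.1.1 + 1) * (N : ℝ) ^ (-(x.1.1 : ℝ) / 2) * ∑ i, ∏ k, σ i (x.2 k)

lemma sum_Hmix_eq_sum_mul_energyCoeff (γ : ℕ → ℝ) (J : DisorderIndex N p₀ → ℝ)
    (σ : Fin m → Fin N → ℝ) :
    ∑ i, Hmix N p₀ γ J (σ i) = ∑ x, J x * energyCoeff γ σ x := by
  rw [← Finset.univ_sigma_univ, Finset.sum_sigma]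
  simp only [Hmix, energyCoeff, Finset.mul_sum]
  rw [Finset.sum_comm]
  refine Finset.sum_congr rfl fun p _ => ?_
  rw [Finset.sum_comm]
  exact Finset.sum_congr rfl fun iv _ => Finset.sum_congr rfl fun i _ => by ring

lemma sum_energyCoeff_sq_le (hN : 0 < N) {ρ : ℝ} (γ : ℕ → ℝ) {σ : Fin m → Fin N → ℝ}
    (hσ : σ ∈ TNf N m ρ) :
    ∑ x : DisorderIndex N p₀, energyCoeff γ σ x ^ 2
      ≤ (∑ p : Fin p₀, γ (p.1 + 1) ^ 2) * (N * (m + m * (m - 1) * ρ)) := by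
  have hNpos : (0 : ℝ) < N := by exact_mod_cast hN
  rw [← Finset.univ_sigma_univ, Finset.sum_sigma, Finset.sum_mul]
  refine Finset.sum_le_sum fun p _ => ?_
  calc ∑ iv : Fin (p.1 + 1) → Fin N, energyCoeff γ σ ⟨p, iv⟩ ^ 2
      = γ (p.1 + 1) ^ 2 * (N ^ (-(p.1 : ℝ) / 2)) ^ 2 *
          ∑ i, ∑ j, (∑ l, σ i l * σ j l) ^ (p.1 + 1) := by
        rw [← sum_sq_sum_prod_eq_sum_sum_inner_pow, Finset.mul_sum]
        exact Finset.sum_congr rfl fun iv _ => by unfold energyCoeff; ring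
    _ ≤ γ (p.1 + 1) ^ 2 * (N ^ (-(p.1 : ℝ) / 2)) ^ 2 *
          ∑ i, ∑ j, (N : ℝ) ^ (p.1 + 1) * (if i = j then 1 else ρ) := by
        gcongr with i _ j _
        exact inner_pow_succ_le_of_mem_TNf hσ hN i j p.1
    _ = γ (p.1 + 1) ^ 2 * ((N ^ (-(p.1 : ℝ) / 2)) ^ 2 * N ^ (p.1 + 1)) *
          (m + m * (m - 1) * ρ) := by
        simp only [← Finset.mul_sum, sum_sum_ite_eq]
        ring
    _ = γ (p.1 + 1) ^ 2 * (N * (m + m * (m - 1) * ρ)) := by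
        rw [rpow_neg_half_sq_mul_pow_succ hNpos, mul_assoc]

lemma abs_sum_Hmix_sub_le (hN : 0 < N) {ρ : ℝ} (γ : ℕ → ℝ) (J J' : DisorderIndex N p₀ → ℝ)
    {σ : Fin m → Fin N → ℝ} (hσ : σ ∈ TNf N m ρ) :
    |∑ i, Hmix N p₀ γ J (σ i) - ∑ i, Hmix N p₀ γ J' (σ i)|
      ≤ √(∑ x, (J x - J' x) ^ 2) *
          √((∑ p : Fin p₀, γ (p.1 + 1) ^ 2) * (N * (m + m * (m - 1) * ρ))) := by
  rw [sum_Hmix_eq_sum_mul_energyCoeff, sum_Hmix_eq_sum_mul_energyCoeff,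
    ← Finset.sum_sub_distrib, ← sqrt_mul (Finset.sum_nonneg fun _ _ => sq_nonneg _)]
  refine abs_le_sqrt ?_
  calc (∑ x, (J x * energyCoeff γ σ x - J' x * energyCoeff γ σ x)) ^ 2
      = (∑ x, (J x - J' x) * energyCoeff γ σ x) ^ 2 := by simp_rw [sub_mul]
    _ ≤ (∑ x, (J x - J' x) ^ 2) * ∑ x, energyCoeff γ σ x ^ 2 :=
        Finset.sum_mul_sq_le_sq_mul_sq _ _ _
    _ ≤ _ := by gcongr; exact sum_energyCoeff_sq_le hN γ hσ

end Hamiltonian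

lemma one_div_mul_sqrt_eq {m N : ℝ} (hm : 0 < m) (hN : 0 < N) (G ρ : ℝ) :
    1 / (m * N) * √(G * (N * (m + m * (m - 1) * ρ)))
      = √(G / N * (1 / m + ρ * (m - 1) / m)) := by
  rw [show G / N * (1 / m + ρ * (m - 1) / m) = G * (N * (m + m * (m - 1) * ρ)) / (m * N) ^ 2 by
    field_simp, sqrt_div' _ (sq_nonneg _), sqrt_sq (by positivity), one_div_mul_eq_div]

theorem statement3_general (N p₀ m : ℕ) (hN : 0 < N) (hm : 0 < m)
    (β ρ : ℝ) (hβ : 0 < β) (γ : ℕ → ℝ)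
    (μ : Measure (Fin N → ℝ)) [IsProbabilityMeasure μ]
    (hT : (Measure.pi fun _ : Fin m => μ) (TNf N m ρ) ≠ 0)
    (hint : ∀ J : DisorderIndex N p₀ → ℝ,
      IntegrableOn (fun σ : Fin m → (Fin N → ℝ) =>
        Real.exp (-β * ∑ i, Hmix N p₀ γ J (σ i))) (TNf N m ρ)
        (Measure.pi fun _ : Fin m => μ)) :
    ∀ J J' : DisorderIndex N p₀ → ℝ,
      |freeEnergyJ N p₀ m β ρ γ μ J - freeEnergyJ N p₀ m β ρ γ μ J'|
        ≤ β * Real.sqrt ((∑ p : Fin p₀, (γ (p.1 + 1)) ^ 2) / N *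
            (1 / m + ρ * ((m : ℝ) - 1) / m))
          * Real.sqrt (∑ x : DisorderIndex N p₀, (J x - J' x) ^ 2) := by
  intro J J'
  have hlog := abs_log_setIntegral_exp_sub_le measurableSet_TNf hT (hint J) (hint J')
    fun σ hσ => by
      rw [← mul_sub, abs_mul, abs_neg, abs_of_pos hβ]
      exact mul_le_mul_of_nonneg_left (abs_sum_Hmix_sub_le hN γ J J' hσ) hβ.le
  rw [freeEnergyJ, freeEnergyJ, ← mul_sub, abs_mul, abs_of_pos (by positivity)]
  calc _ ≤ 1 / ((m : ℝ) * N) * (β * (√(∑ x, (J x - J' x) ^ 2) *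
        √((∑ p : Fin p₀, γ (p.1 + 1) ^ 2) * (N * (m + m * (m - 1) * ρ))))) := by gcongr
    _ = _ := by
      rw [← one_div_mul_sqrt_eq (by positivity) (by positivity)]
      ring

/-- `F_{N,β}(H_{N,ν}(J,·), m, ρ)` is a Lipschitz function of the disorder array `J`
(with the Euclidean `L²` norm on the space of arrays), with Lipschitz constant
`β √( ν(1)/N · (1/m + ρ(m-1)/m) )`, where `ν(1) = ∑_{p=1}^{p₀} γ_p²`. -/
theorem statement3 (N p₀ m : ℕ) (hN : 0 < N) (hp₀ : 0 < p₀) (hm : 0 < m)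
    (β ρ : ℝ) (hβ : 0 < β) (hρ : 0 < ρ) (γ : ℕ → ℝ)
    (μ : Measure (Fin N → ℝ)) [IsProbabilityMeasure μ]
    (hsupp : ∀ᵐ σ ∂μ, ∑ k, (σ k) ^ 2 = (N : ℝ))
    (hT : (Measure.pi fun _ : Fin m => μ) (TNf N m ρ) ≠ 0)
    (hint : ∀ J : DisorderIndex N p₀ → ℝ,
      IntegrableOn (fun σ : Fin m → (Fin N → ℝ) =>
        Real.exp (-β * ∑ i, Hmix N p₀ γ J (σ i))) (TNf N m ρ)
        (Measure.pi fun _ : Fin m => μ)) :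
    ∀ J J' : DisorderIndex N p₀ → ℝ,
      |freeEnergyJ N p₀ m β ρ γ μ J - freeEnergyJ N p₀ m β ρ γ μ J'|
        ≤ β * Real.sqrt ((∑ p : Fin p₀, (γ (p.1 + 1)) ^ 2) / N *
            (1 / m + ρ * ((m : ℝ) - 1) / m))
          * Real.sqrt (∑ x : DisorderIndex N p₀, (J x - J' x) ^ 2) :=
  statement3_general N p₀ m hN hm β ρ hβ γ μ hT hint
end

section
/- Let $q_\star,q_\star'\in(0,1]$ and $q\in[-1,1]$. Let $\sigma_0,\sigma_0'\in\mathbb{R}^N$ with $\|\sigma_0\|^2=Nq_\star$, $\|\sigma_0'\|^2=Nq_\star'$, and let $\sigma_1,\dots,\sigma_m$ and $\sigma_1',\dots,\sigma_m'$ be vectors with $\|\sigma_i\|^2=\|\sigma_i'\|^2=N$ such that $|\langle\sigma_i-\sigma_0,\sigma_j-\sigma_0\rangle|/N\le \epsilon$ and $|\langle\sigma_i'-\sigma_0',\sigma_j'-\sigma_0'\rangle|/N\le\epsilon$ for all $i\ne j$. If $i,j$ are chosen independently and uniformly from $\{1,\dots,m\}$, then with probability at least $1-3\lceil\sqrt m\rceil/m$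 over the choice of $(i,j)$, $\big|\langle\sigma_i,\sigma_j'\rangle/N - \langle\sigma_0,\sigma_0'\rangle/N\big| \le 3(m^{-1/4}C + \sqrt\epsilon\, C')$ for constants $C,C'$ depending only on the norm bounds (e.g. $C,C'\le 4$). -/
/-!
Write `τᵢ = σᵢ - σ₀` and `τ'ⱼ = σ'ⱼ - σ₀'`, so that
`⟪σᵢ, σ'ⱼ⟫ - ⟪σ₀, σ₀'⟫ = ⟪τᵢ, σ₀'⟫ + ⟪τᵢ, τ'ⱼ⟫ + ⟪τ'ⱼ, σ₀⟫`.
Fix a vector `w` with `‖w‖² ≤ a²N` and let `S` be the set of indices with `|⟪τᵢ, w⟫| > atN`.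
Testing `w` against `u = ∑_{i ∈ S} sign ⟪τᵢ, w⟫ • τᵢ` gives `|S| atN < ⟪u, w⟫ ≤ ‖u‖ ‖w‖`, while
near-orthogonality gives `‖u‖² ≤ |S| (4N + |S| εN)`; hence `|S| ≤ k = ⌈√m⌉` as soon as
`k t² ≥ 4 + k ε`, e.g. for `t = √ε + 2/√k`. Applying this to `w = σ₀'` and `w = σ₀` (with
`a = 1`) and to each `w = τ'ⱼ` (with `a = 2`), at most `3mk` of the `m²` pairs are bad, and on
the remaining pairs the overlap moves by at most `4t ≤ 12 (m^{-1/4} + √ε)`.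
-/

open Finset Real
open scoped RealInnerProductSpace

theorem four_add_mul_le_mul_sq {k ε : ℝ} (hk : 0 < k) (hε : 0 ≤ ε) :
    4 + k * ε ≤ k * (√ε + 2 / √k) ^ 2 := by
  have hsk : 0 < √k := sqrt_pos.mpr hk
  calc 4 + k * ε ≤ (√k * √ε + 2) ^ 2 := by
        nlinarith [sq_sqrt hk.le, sq_sqrt hε, mul_nonneg hsk.le (sqrt_nonneg ε)]
    _ = k * (√ε + 2 / √k) ^ 2 := by
        field_simp
        exact sq_sqrt hk.le

theorem inv_sqrt_ceil_sqrt_le_rpow {m : ℝ} (hm : 0 < m) :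
    (√(⌈√m⌉₊ : ℝ))⁻¹ ≤ m ^ (-(1 : ℝ) / 4) := by
  have hroot : √(√m) = m ^ ((1 : ℝ) / 4) := by
    rw [sqrt_eq_rpow, sqrt_eq_rpow, ← rpow_mul hm.le]
    norm_num
  rw [neg_div, rpow_neg hm.le, ← hroot]
  gcongr
  exact Nat.le_ceil _

theorem four_mul_threshold_le {m : ℝ} (ε : ℝ) (hm : 0 < m) :
    4 * (√ε + 2 / √(⌈√m⌉₊ : ℝ)) ≤ 3 * (m ^ (-(1 : ℝ) / 4) * 4 + √ε * 4) := by
  have := inv_sqrt_ceil_sqrt_le_rpow hm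
  have : 0 ≤ m ^ (-(1 : ℝ) / 4) := by positivity
  rw [div_eq_mul_inv]
  nlinarith [sqrt_nonneg ε]

theorem norm_sub_sq_le_four_mul {E : Type*} [SeminormedAddCommGroup E] {x y : E} {r : ℝ}
    (hx : ‖x‖ ^ 2 ≤ r) (hy : ‖y‖ ^ 2 ≤ r) : ‖x - y‖ ^ 2 ≤ 4 * r := by
  have := norm_sub_le x y
  nlinarith [norm_nonneg (x - y), sq_nonneg (‖x‖ - ‖y‖)]

theorem abs_sign_le_one (x : ℝ) : |(SignType.sign x : ℝ)| ≤ 1 := by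
  rcases SignType.sign x with _ | _ | _ <;> simp

theorem card_filter_not_le_of_cover {α β : Type*} [Fintype α] [Fintype β]
    (G C : α × β → Prop) (A : α → Prop) (B : β → Prop) [DecidablePred G] [DecidablePred C]
    [DecidablePred A] [DecidablePred B] {k : ℕ}
    (hA : #{a | A a} ≤ k) (hB : #{b | B b} ≤ k) (hC : ∀ b, #{a | C (a, b)} ≤ k)
    (hG : ∀ p, ¬ G p → A p.1 ∨ B p.2 ∨ C p) :
    #{p | ¬ G p} ≤ k * Fintype.card β + Fintype.card α * k + Fintype.card β * k := by
  classical
  set SA : Finset α := {a | A a}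
  set SB : Finset β := {b | B b}
  set SC : Finset (α × β) := {p | C p}
  have hsub : ({p | ¬ G p} : Finset (α × β)) ⊆ (SA ×ˢ univ ∪ univ ×ˢ SB) ∪ SC := by
    intro p hp
    simpa [SA, SB, SC, or_assoc] using hG p (mem_filter.mp hp).2
  have hSC : #SC ≤ Fintype.card β * k := by
    rw [card_filter, Fintype.sum_prod_type_right]
    simpa [← card_filter] using sum_le_sum fun b (_ : b ∈ univ) => hC b
  calc _ ≤ _ := card_le_card hsub
    _ ≤ #(SA ×ˢ univ) + #(univ ×ˢ SB) + #SC :=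
        (card_union_le _ _).trans (by gcongr; exact card_union_le _ _)
    _ ≤ _ := by
        rw [card_product, card_product, card_univ, card_univ]
        gcongr

section NearlyOrthogonal

variable {ι κ E : Type*} [NormedAddCommGroup E] [InnerProductSpace ℝ E]

theorem inner_sub_inner_eq (x y x₀ y₀ : E) :
    ⟪x, y⟫ - ⟪x₀, y₀⟫ = ⟪x - x₀, y₀⟫ + ⟪x - x₀, y - y₀⟫ + ⟪y - y₀, x₀⟫ := by
  simp only [inner_sub_left, inner_sub_right, real_inner_comm x₀]
  ring

theorem abs_inner_div_sub_inner_div_le (x y x₀ y₀ : E) {N t : ℝ} (hN : 0 < N)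
    (hx : |⟪x - x₀, y₀⟫| ≤ 1 * t * N) (hy : |⟪y - y₀, x₀⟫| ≤ 1 * t * N)
    (hxy : |⟪x - x₀, y - y₀⟫| ≤ 2 * t * N) :
    |⟪x, y⟫ / N - ⟪x₀, y₀⟫ / N| ≤ 4 * t := by
  rw [← sub_div, abs_div, abs_of_pos hN, div_le_iff₀ hN, inner_sub_inner_eq]
  have := abs_add_three ⟪x - x₀, y₀⟫ ⟪x - x₀, y - y₀⟫ ⟪y - y₀, x₀⟫
  linarith

theorem norm_sum_sq_le_of_inner_le (s : Finset ι) (a : ι → E) {R δ : ℝ}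
    (hR : ∀ i ∈ s, ‖a i‖ ^ 2 ≤ R) (hδ : ∀ i ∈ s, ∀ j ∈ s, i ≠ j → ⟪a i, a j⟫ ≤ δ) :
    ‖∑ i ∈ s, a i‖ ^ 2 ≤ #s * (R + (#s - 1) * δ) := by
  classical
  rw [← real_inner_self_eq_norm_sq, sum_inner]
  calc ∑ i ∈ s, ⟪a i, ∑ j ∈ s, a j⟫ ≤ ∑ _i ∈ s, (R + (#s - 1) * δ) := by
        refine sum_le_sum fun i hi => ?_
        rw [inner_sum, ← add_sum_erase s _ hi, real_inner_self_eq_norm_sq]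
        gcongr
        · exact hR i hi
        · calc ∑ j ∈ s.erase i, ⟪a i, a j⟫ ≤ ∑ _j ∈ s.erase i, δ :=
                sum_le_sum fun j hj => hδ i hi j (mem_of_mem_erase hj) (ne_of_mem_erase hj).symm
            _ = (#s - 1) * δ := by rw [sum_const, nsmul_eq_mul, cast_card_erase_of_mem hi]
    _ = #s * (R + (#s - 1) * δ) := by rw [sum_const, nsmul_eq_mul]

theorem card_mul_sq_lt_of_lt_abs_inner (s : Finset ι) (v : ι → E) (w : E) {R δ t : ℝ}
    (hs : s.Nonempty) (hv : ∀ i ∈ s, ‖v i‖ ^ 2 ≤ R)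
    (horth : ∀ i ∈ s, ∀ j ∈ s, i ≠ j → |⟪v i, v j⟫| ≤ δ) (ht : 0 ≤ t)
    (hw : ∀ i ∈ s, t < |⟪v i, w⟫|) :
    #s * t ^ 2 < (R + (#s - 1) * δ) * ‖w‖ ^ 2 := by
  set c : ℝ := (#s : ℝ)
  have hc : 0 < c := by simpa [c] using hs.card_pos
  set u := ∑ i ∈ s, (SignType.sign ⟪v i, w⟫ : ℝ) • v i
  have hlow : c * t < ⟪u, w⟫ := by
    have := sum_lt_sum_of_nonempty hs hw
    simpa [u, c, sum_inner, real_inner_smul_left] using this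
  have hu : ‖u‖ ^ 2 ≤ c * (R + (c - 1) * δ) := by
    refine norm_sum_sq_le_of_inner_le s _ (fun i hi => ?_) (fun i hi j hj hij => ?_)
    · calc ‖(SignType.sign ⟪v i, w⟫ : ℝ) • v i‖ ^ 2
          = |(SignType.sign ⟪v i, w⟫ : ℝ)| ^ 2 * ‖v i‖ ^ 2 := by
            rw [norm_smul, Real.norm_eq_abs, mul_pow]
        _ ≤ 1 * ‖v i‖ ^ 2 := by gcongr; exact pow_le_one₀ (abs_nonneg _) (abs_sign_le_one _)
        _ ≤ R := by simpa using hv i hi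
    · rw [real_inner_smul_left, real_inner_smul_right]
      calc _ ≤ |(SignType.sign ⟪v i, w⟫ : ℝ) * ((SignType.sign ⟪v j, w⟫ : ℝ) * ⟪v i, v j⟫)| :=
            le_abs_self _
        _ ≤ 1 * (1 * |⟪v i, v j⟫|) := by
            rw [abs_mul, abs_mul]; gcongr <;> exact abs_sign_le_one _
        _ ≤ δ := by simpa using horth i hi j hj hij
  have hCS : (c * t) ^ 2 < ‖u‖ ^ 2 * ‖w‖ ^ 2 := by
    rw [← mul_pow]
    exact pow_lt_pow_left₀ (hlow.trans_le (real_inner_le_norm u w)) (by positivity) two_ne_zero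
  have := hCS.trans_le (mul_le_mul_of_nonneg_right hu (by positivity))
  nlinarith

theorem card_filter_lt_abs_inner_le [Fintype ι] (v : ι → E) (w : E) {R δ t : ℝ} {k : ℕ}
    (hk : 0 < k) (hv : ∀ i, ‖v i‖ ^ 2 ≤ R) (horth : ∀ i j, i ≠ j → |⟪v i, v j⟫| ≤ δ)
    (hδ : 0 ≤ δ) (ht : 0 ≤ t) (hkt : ‖w‖ ^ 2 * (R + k * δ) ≤ k * t ^ 2) :
    #{i | t < |⟪v i, w⟫|} ≤ k := by
  by_contra! hlt
  set s := ({i | t < |⟪v i, w⟫|} : Finset ι)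
  have hs : s.Nonempty := card_pos.mp (hk.trans hlt)
  obtain ⟨i₀, -⟩ := id hs
  have hR : 0 ≤ R := (sq_nonneg _).trans (hv i₀)
  have key := card_mul_sq_lt_of_lt_abs_inner s v w hs (fun i _ => hv i)
    (fun i _ j _ => horth i j) ht (fun i hi => (mem_filter.mp hi).2)
  have hks : (k : ℝ) < #s := by exact_mod_cast hlt
  have hkpos : (0 : ℝ) < k := by exact_mod_cast hk
  nlinarith [sq_nonneg ‖w‖, mul_nonneg (sq_nonneg ‖w‖) hR, mul_nonneg (sq_nonneg ‖w‖) hδ]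

theorem card_filter_sqrt_threshold_lt_abs_inner_le [Fintype ι] (v : ι → E) (w : E) {N ε a : ℝ}
    {k : ℕ} (hk : 0 < k) (hN : 0 ≤ N) (hε : 0 ≤ ε) (ha : 0 ≤ a)
    (hv : ∀ i, ‖v i‖ ^ 2 ≤ 4 * N) (horth : ∀ i j, i ≠ j → |⟪v i, v j⟫| ≤ ε * N)
    (hw : ‖w‖ ^ 2 ≤ a ^ 2 * N) :
    #{i | a * (√ε + 2 / √k) * N < |⟪v i, w⟫|} ≤ k := by
  refine card_filter_lt_abs_inner_le v w hk hv horth (by positivity) (by positivity) ?_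
  have hthreshold := four_add_mul_le_mul_sq (k := k) (by positivity) hε
  calc ‖w‖ ^ 2 * (4 * N + k * (ε * N)) ≤ a ^ 2 * N * (N * (4 + k * ε)) := by
        rw [show 4 * N + k * (ε * N) = N * (4 + k * ε) by ring]
        gcongr
    _ ≤ a ^ 2 * N * (N * (k * (√ε + 2 / √k) ^ 2)) := by gcongr
    _ = k * (a * (√ε + 2 / √k) * N) ^ 2 := by ring

theorem card_filter_not_abs_inner_div_sub_le [Fintype ι] [Fintype κ] (x : ι → E) (y : κ → E)
    (x₀ y₀ : E) {N ε : ℝ} {k : ℕ} (hk : 0 < k) (hN : 0 < N) (hε : 0 ≤ ε)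
    (hx₀ : ‖x₀‖ ^ 2 ≤ N) (hy₀ : ‖y₀‖ ^ 2 ≤ N)
    (hx : ∀ i, ‖x i - x₀‖ ^ 2 ≤ 4 * N) (hy : ∀ j, ‖y j - y₀‖ ^ 2 ≤ 4 * N)
    (horthx : ∀ i i', i ≠ i' → |⟪x i - x₀, x i' - x₀⟫| ≤ ε * N)
    (horthy : ∀ j j', j ≠ j' → |⟪y j - y₀, y j' - y₀⟫| ≤ ε * N) :
    #{p : ι × κ | ¬ |⟪x p.1, y p.2⟫ / N - ⟪x₀, y₀⟫ / N| ≤ 4 * (√ε + 2 / √k)} ≤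
      k * Fintype.card κ + Fintype.card ι * k + Fintype.card κ * k := by
  set t := √ε + 2 / √k
  have hx₀' : ‖x₀‖ ^ 2 ≤ 1 ^ 2 * N := by rwa [one_pow, one_mul]
  have hy₀' : ‖y₀‖ ^ 2 ≤ 1 ^ 2 * N := by rwa [one_pow, one_mul]
  have hfar_x : #{i | 1 * t * N < |⟪x i - x₀, y₀⟫|} ≤ k :=
    card_filter_sqrt_threshold_lt_abs_inner_le _ y₀ hk hN.le hε zero_le_one hx horthx hy₀'
  have hfar_y : #{j | 1 * t * N < |⟪y j - y₀, x₀⟫|} ≤ k :=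
    card_filter_sqrt_threshold_lt_abs_inner_le _ x₀ hk hN.le hε zero_le_one hy horthy hx₀'
  have hfar_xy (j : κ) : #{i | 2 * t * N < |⟪x i - x₀, y j - y₀⟫|} ≤ k :=
    card_filter_sqrt_threshold_lt_abs_inner_le _ _ hk hN.le hε zero_le_two hx horthx
      ((hy j).trans_eq (by norm_num))
  exact card_filter_not_le_of_cover
    (fun p : ι × κ => |⟪x p.1, y p.2⟫ / N - ⟪x₀, y₀⟫ / N| ≤ 4 * t)
    (fun p => 2 * t * N < |⟪x p.1 - x₀, y p.2 - y₀⟫|) _ _ hfar_x hfar_y hfar_xy fun p hp => by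
      by_contra! hgood
      exact hp (abs_inner_div_sub_inner_div_le _ _ _ _ hN hgood.1 hgood.2.1 hgood.2.2)

end NearlyOrthogonal

/-- Near-orthogonality averaging: if the centered configurations `σ_i - σ₀` (resp.
`σ'_j - σ₀'`) are pairwise nearly orthogonal, then for a uniformly random pair `(i,j)`,
with probability at least `1 - 3⌈√m⌉/m`, the overlap `⟨σ_i, σ'_j⟩/N` is within
`3(m^{-1/4}C + √ε C')` of `⟨σ₀, σ₀'⟩/N`, for absolute constants `C, C' ≤ 4`. -/
theorem statement14 : ∃ C C' : ℝ, 0 < C ∧ 0 < C' ∧ C ≤ 4 ∧ C' ≤ 4 ∧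
    ∀ (N m : ℕ), 0 < N → 0 < m →
    ∀ (qs qs' : ℝ), qs ∈ Set.Ioc (0 : ℝ) 1 → qs' ∈ Set.Ioc (0 : ℝ) 1 →
    ∀ (ε : ℝ), 0 ≤ ε →
    ∀ (σ₀ σ₀' : EuclideanSpace ℝ (Fin N)),
      ‖σ₀‖ ^ 2 = N * qs → ‖σ₀'‖ ^ 2 = N * qs' →
    ∀ (σ σ' : Fin m → EuclideanSpace ℝ (Fin N)),
      (∀ i, ‖σ i‖ ^ 2 = (N : ℝ)) → (∀ i, ‖σ' i‖ ^ 2 = (N : ℝ)) →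
      (∀ i j, i ≠ j → |(inner ℝ (σ i - σ₀) (σ j - σ₀) : ℝ)| / N ≤ ε) →
      (∀ i j, i ≠ j → |(inner ℝ (σ' i - σ₀') (σ' j - σ₀') : ℝ)| / N ≤ ε) →
      (1 - 3 * (⌈Real.sqrt m⌉₊ : ℝ) / m) * (m : ℝ) ^ 2 ≤
        (Set.ncard {p : Fin m × Fin m |
          |(inner ℝ (σ p.1) (σ' p.2) : ℝ) / N - (inner ℝ σ₀ σ₀' : ℝ) / N|
            ≤ 3 * ((m : ℝ) ^ (-(1 : ℝ) / 4) * C + Real.sqrt ε * C')} : ℝ) := by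
  refine ⟨4, 4, by norm_num, by norm_num, le_rfl, le_rfl, ?_⟩
  intro N m hN hm qs qs' hqs hqs' ε hε σ₀ σ₀' h₀ h₀' σ σ' hσ hσ' horth horth'
  set k := ⌈√(m : ℝ)⌉₊
  set t := √ε + 2 / √(k : ℝ)
  have hNpos : (0 : ℝ) < N := by exact_mod_cast hN
  have hmpos : (0 : ℝ) < m := by exact_mod_cast hm
  have hk : 0 < k := Nat.ceil_pos.mpr (by positivity)
  have hσ₀ : ‖σ₀‖ ^ 2 ≤ N := by rw [h₀]; nlinarith [hqs.2]
  have hσ₀' : ‖σ₀'‖ ^ 2 ≤ N := by rw [h₀']; nlinarith [hqs'.2]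
  have hbad := card_filter_not_abs_inner_div_sub_le σ σ' σ₀ σ₀' hk hNpos hε hσ₀ hσ₀'
    (fun i => norm_sub_sq_le_four_mul (hσ i).le hσ₀)
    (fun j => norm_sub_sq_le_four_mul (hσ' j).le hσ₀')
    (fun i j hij => (div_le_iff₀ hNpos).1 (horth i j hij))
    (fun i j hij => (div_le_iff₀ hNpos).1 (horth' i j hij))
  have hsplit := card_filter_add_card_filter_not (s := (univ : Finset (Fin m × Fin m)))
    (fun p => |⟪σ p.1, σ' p.2⟫ / N - ⟪σ₀, σ₀'⟫ / N| ≤ 4 * t)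
  have ht := four_mul_threshold_le ε hmpos
  simp only [Fintype.card_fin, card_univ, Fintype.card_prod] at hbad hsplit
  rw [Set.ncard_eq_toFinset_card', Set.toFinset_ofPred]
  calc (1 - 3 * (k : ℝ) / m) * (m : ℝ) ^ 2 = m * m - (k * m + m * k + m * k : ℕ) := by
        push_cast; field_simp; ring
    _ ≤ #({p | |⟪σ p.1, σ' p.2⟫ / N - ⟪σ₀, σ₀'⟫ / N| ≤ 4 * t} : Finset (Fin m × Fin m)) := by
        rw [sub_le_iff_le_add]
        exact_mod_cast hsplit.ge.trans (by gcongr)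
    _ ≤ _ := by
        refine Nat.cast_le.mpr <| card_le_card fun p hp => ?_
        simp only [mem_filter] at hp ⊢
        exact ⟨hp.1, hp.2.trans ht⟩
end
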